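/- Let T > 0 and θ : ℝ → ℝ be continuous and T-periodic, and let h ∈ C³([0,T];ℝ) with h(0)=h'(0)=h''(0)=0. Then for τ ∈ (0,1], ∫₀ᵀ h(t) θ((T−t)/τ) dt = ⟨θ⟩ ∫₀ᵀ h − τ ⟨θ₁⟩ h(T) + τ² ⟨θ₂⟩ h'(T) − τ³ ∫₀ᵀ h'''(t) θ₃((T−t)/τ) dt, where ⟨f⟩ := (1/T)∫₀ᵀ f, θ₀ := θ and θ_{k+1}(t) := (t/T)∫₀ᵀ θ_k − ∫₀ᵗ θ_k. In particular ∫₀ᵀ h(t) θ((T−t)/τ) dt → ⟨θ⟩ ∫₀ᵀ h as τ → 0. -/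

import Mathlib

/-!
Write `u(x) = (T - x)/τ`. By construction `θ_{k+1}' = ⟨θ_k⟩ - θ_k` and `θ_{k+1}(0) = 0`, so
`x ↦ τ θ_{k+1}(u(x))` is a primitive of `θ_k(u(x)) - ⟨θ_k⟩` vanishing at `x = T`. Integrating by
parts against `g` with `g(0) = 0` therefore gives
`∫₀ᵀ g θ_k(u) = ⟨θ_k⟩ ∫₀ᵀ g - τ ∫₀ᵀ g' θ_{k+1}(u)`,
and three such steps, applied to `h, h', h''`, give the expansion. The `θ_k` are continuous and
`T`-periodic, hence bounded, so the remainder is `O(τ³)`.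
-/

open MeasureTheory

/-- The iterated averaged primitives `θ_k` of a `T`-periodic function `θ`:
`θ₀ := θ` and `θ_{k+1}(t) := (t/T)∫₀ᵀ θ_k − ∫₀ᵗ θ_k`. -/
noncomputable def thIter (T : ℝ) (θ : ℝ → ℝ) : ℕ → ℝ → ℝ
  | 0 => θ
  | (k+1) => fun t => (t / T) * (∫ x in (0:ℝ)..T, thIter T θ k x) - ∫ x in (0:ℝ)..t, thIter T θ k x

open intervalIntegral Set Filter Topology

variable {T : ℝ} {θ : ℝ → ℝ}

theorem continuous_thIter (hθ : Continuous θ) (k : ℕ) : Continuous (thIter T θ k) := by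
  induction k with
  | zero => exact hθ
  | succ k ih =>
    exact ((continuous_id.div_const T).mul continuous_const).sub
      (continuous_primitive (fun a b => ih.intervalIntegrable a b) 0)

@[simp]
theorem thIter_succ_zero (k : ℕ) : thIter T θ (k + 1) 0 = 0 := by
  simp [thIter]

theorem hasDerivAt_thIter_succ (hθ : Continuous θ) (k : ℕ) (t : ℝ) :
    HasDerivAt (thIter T θ (k + 1))
      ((1 / T) * (∫ x in (0:ℝ)..T, thIter T θ k x) - thIter T θ k t) t := by
  have hlin : HasDerivAt (fun t : ℝ => (t / T) * ∫ x in (0:ℝ)..T, thIter T θ k x)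
      ((1 / T) * ∫ x in (0:ℝ)..T, thIter T θ k x) t := by
    simpa [one_div] using
      ((hasDerivAt_id t).div_const T).mul_const (∫ x in (0:ℝ)..T, thIter T θ k x)
  exact hlin.sub ((continuous_thIter hθ k).integral_hasStrictDerivAt 0 t).hasDerivAt

theorem periodic_thIter (hθ : Continuous θ) (hper : Function.Periodic θ T) (k : ℕ) :
    Function.Periodic (thIter T θ k) T := by
  induction k with
  | zero => exact hper
  | succ k ih =>
    intro t
    have hk := continuous_thIter (T := T) hθ k
    have hsplit : (∫ x in (0:ℝ)..(t + T), thIter T θ k x)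
        = (∫ x in (0:ℝ)..t, thIter T θ k x) + ∫ x in (0:ℝ)..T, thIter T θ k x := by
      rw [← integral_add_adjacent_intervals (hk.intervalIntegrable 0 t)
        (hk.intervalIntegrable t (t + T)), ih.intervalIntegral_add_eq t 0, zero_add]
    rcases eq_or_ne T 0 with rfl | hT
    · simp
    · simp only [thIter, hsplit]
      field_simp
      ring

theorem hasDerivAt_mul_thIter_succ_comp (hθ : Continuous θ) (k : ℕ) {τ : ℝ} (hτ : τ ≠ 0)
    (x : ℝ) :
    HasDerivAt (fun x => τ * thIter T θ (k + 1) ((T - x) / τ))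
      (thIter T θ k ((T - x) / τ) - (1 / T) * ∫ y in (0:ℝ)..T, thIter T θ k y) x := by
  have hu : HasDerivAt (fun x : ℝ => (T - x) / τ) (-1 / τ) x := by
    simpa using ((hasDerivAt_id x).const_sub T).div_const τ
  refine (((hasDerivAt_thIter_succ (T := T) hθ k _).comp x hu).const_mul τ).congr_deriv ?_
  field_simp
  ring

theorem integral_mul_thIter_comp_eq (hθ : Continuous θ) (k : ℕ) {g g' : ℝ → ℝ}
    (hg : ∀ x ∈ uIcc 0 T, HasDerivAt g (g' x) x) (hg' : IntervalIntegrable g' volume 0 T)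
    (hg0 : g 0 = 0) {τ : ℝ} (hτ : τ ≠ 0) :
    (∫ x in (0:ℝ)..T, g x * thIter T θ k ((T - x) / τ)) =
      ((1 / T) * ∫ x in (0:ℝ)..T, thIter T θ k x) * (∫ x in (0:ℝ)..T, g x)
        - τ * ∫ x in (0:ℝ)..T, g' x * thIter T θ (k + 1) ((T - x) / τ) := by
  set c := (1 / T) * ∫ x in (0:ℝ)..T, thIter T θ k x
  have hu : Continuous fun x : ℝ => (T - x) / τ := by fun_prop
  have hgc : IntervalIntegrable g volume 0 T :=
    ContinuousOn.intervalIntegrable fun x hx => (hg x hx).continuousAt.continuousWithinAt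
  have hF' : Continuous fun x => thIter T θ k ((T - x) / τ) - c :=
    ((continuous_thIter hθ k).comp hu).sub continuous_const
  have hparts := integral_mul_deriv_eq_deriv_mul hg
    (fun x _ => hasDerivAt_mul_thIter_succ_comp (T := T) hθ k hτ x) hg'
    (hF'.intervalIntegrable 0 T)
  have hsplit : (∫ x in (0:ℝ)..T, g x * thIter T θ k ((T - x) / τ))
      = (∫ x in (0:ℝ)..T, g x * (thIter T θ k ((T - x) / τ) - c)) + c * ∫ x in (0:ℝ)..T, g x := by
    rw [← intervalIntegral.integral_const_mul,
      ← integral_add (hgc.mul_continuousOn hF'.continuousOn) (hgc.const_mul c)]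
    congr 1 with x
    ring
  rw [hsplit, hparts, sub_self, zero_div, thIter_succ_zero, hg0]
  simp only [mul_left_comm _ τ, intervalIntegral.integral_const_mul]
  ring

theorem integral_mul_comp_eq_expansion (hθ : Continuous θ) {h : ℝ → ℝ} (hh : ContDiff ℝ 3 h)
    (h0 : h 0 = 0) (h1 : deriv h 0 = 0) (h2 : deriv (deriv h) 0 = 0) {τ : ℝ} (hτ : τ ≠ 0) :
    (∫ x in (0:ℝ)..T, h x * θ ((T - x) / τ)) =
      ((1 / T) * ∫ x in (0:ℝ)..T, θ x) * (∫ x in (0:ℝ)..T, h x)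
        - τ * ((1 / T) * ∫ x in (0:ℝ)..T, thIter T θ 1 x) * h T
        + τ ^ 2 * ((1 / T) * ∫ x in (0:ℝ)..T, thIter T θ 2 x) * deriv h T
        - τ ^ 3 * ∫ x in (0:ℝ)..T, deriv (deriv (deriv h)) x * thIter T θ 3 ((T - x) / τ) := by
  have hh' : ContDiff ℝ 2 (deriv h) := hh.deriv'
  have hh'' : ContDiff ℝ 1 (deriv (deriv h)) := hh'.deriv'
  have d0 : Differentiable ℝ h := hh.differentiable (by norm_num)
  have d1 : Differentiable ℝ (deriv h) := hh'.differentiable (by norm_num)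
  have d2 : Differentiable ℝ (deriv (deriv h)) := hh''.differentiable (by norm_num)
  have c3 : Continuous (deriv (deriv (deriv h))) := hh''.continuous_deriv le_rfl
  have s0 := integral_mul_thIter_comp_eq (T := T) hθ 0 (fun x _ => (d0 x).hasDerivAt)
    (d1.continuous.intervalIntegrable 0 T) h0 hτ
  have s1 := integral_mul_thIter_comp_eq (T := T) hθ 1 (fun x _ => (d1 x).hasDerivAt)
    (d2.continuous.intervalIntegrable 0 T) h1 hτ
  have s2 := integral_mul_thIter_comp_eq (T := T) hθ 2 (fun x _ => (d2 x).hasDerivAt)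
    (c3.intervalIntegrable 0 T) h2 hτ
  rw [thIter.eq_1] at s0
  rw [s0, s1, s2, integral_deriv_eq_sub (fun x _ => d0 x) (d1.continuous.intervalIntegrable 0 T),
    integral_deriv_eq_sub (fun x _ => d1 x) (d2.continuous.intervalIntegrable 0 T), h0, h1]
  ring

theorem isBoundedUnder_norm_integral_mul_comp {ι : Type*} {l : Filter ι} {f φ : ℝ → ℝ} {a b : ℝ}
    (hf : IntervalIntegrable f volume a b) (hφ : Bornology.IsBounded (range φ))
    (u : ι → ℝ → ℝ) :
    IsBoundedUnder (· ≤ ·) l (fun i => ‖∫ x in a..b, f x * φ (u i x)‖) := by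
  obtain ⟨M, hM⟩ := hφ.exists_norm_le
  refine isBoundedUnder_of ⟨|∫ x in a..b, ‖f x‖ * M|, fun i =>
    norm_integral_le_abs_of_norm_le (ae_of_all _ fun x => ?_) (hf.norm.mul_const M)⟩
  rw [norm_mul]
  exact mul_le_mul_of_nonneg_left (hM _ (mem_range_self _)) (norm_nonneg _)

theorem stmt15 (T : ℝ) (hT : 0 < T) (θ : ℝ → ℝ) (hθ : Continuous θ)
    (hper : Function.Periodic θ T) (h : ℝ → ℝ) (hh : ContDiff ℝ 3 h)
    (h0 : h 0 = 0) (h1 : deriv h 0 = 0) (h2 : deriv (deriv h) 0 = 0) :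
    (∀ τ : ℝ, τ ∈ Set.Ioc (0:ℝ) 1 →
      (∫ x in (0:ℝ)..T, h x * θ ((T - x) / τ)) =
        ((1 / T) * ∫ x in (0:ℝ)..T, θ x) * (∫ x in (0:ℝ)..T, h x)
        - τ * ((1 / T) * ∫ x in (0:ℝ)..T, thIter T θ 1 x) * h T
        + τ ^ 2 * ((1 / T) * ∫ x in (0:ℝ)..T, thIter T θ 2 x) * deriv h T
        - τ ^ 3 * ∫ x in (0:ℝ)..T, deriv (deriv (deriv h)) x * thIter T θ 3 ((T - x) / τ)) ∧
    Filter.Tendsto (fun τ : ℝ => ∫ x in (0:ℝ)..T, h x * θ ((T - x) / τ))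
      (nhdsWithin 0 (Set.Ioi 0))
      (nhds (((1 / T) * ∫ x in (0:ℝ)..T, θ x) * ∫ x in (0:ℝ)..T, h x)) := by
  refine ⟨fun τ hτ => integral_mul_comp_eq_expansion hθ hh h0 h1 h2 hτ.1.ne', ?_⟩
  have hh'' : ContDiff ℝ 1 (deriv (deriv h)) := (hh.deriv' : ContDiff ℝ 2 _).deriv'
  have hθ₃ : Bornology.IsBounded (range (thIter T θ 3)) :=
    (periodic_thIter hθ hper 3).isBounded_of_continuous hT.ne' (continuous_thIter hθ 3)
  have hrem : Tendsto (fun τ : ℝ => τ ^ 3 *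
      ∫ x in (0:ℝ)..T, deriv (deriv (deriv h)) x * thIter T θ 3 ((T - x) / τ)) (𝓝 0) (𝓝 0) :=
    ((continuous_pow 3).tendsto' 0 0 (by norm_num)).zero_mul_isBoundedUnder_le
      (isBoundedUnder_norm_integral_mul_comp
        ((hh''.continuous_deriv le_rfl).intervalIntegrable 0 T) hθ₃ _)
  refine Tendsto.congr' (eventually_nhdsWithin_of_forall fun τ (hτ : 0 < τ) =>
    (integral_mul_comp_eq_expansion hθ hh h0 h1 h2 hτ.ne').symm) ?_
  refine tendsto_nhdsWithin_of_tendsto_nhds ?_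
  convert (Continuous.tendsto ?_ 0).sub hrem using 2
  · simp
  · fun_prop
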